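/- Let 𝒯 = {(x,ξ) ∈ [0,1]² : ξ ≤ x}, and let L : [0,1]⁴ → ℝ be measurable such that for every (x,ξ) ∈ 𝒯 the function L(x,ξ,·,·) lies in L²([0,1]²;ℝ) with ‖L(x,ξ,·,·)‖_{L²([0,1]²)} ≤ M for a fixed constant M ≥ 0. Then for every g ∈ L²([0,1]²;ℝ) there exists a unique v ∈ L²([0,1]²;ℝ) satisfying v(x,η) = g(x,η) + ∫₀ˣ ∫₀¹ L(x,ξ,η,ζ) v(ξ,ζ) dζ dξ for almost every (x,η) ∈ [0,1]². Consequently, the backstepping transformation v ↦ v − ∫₀ˣ∫₀¹ L(x,ξ,·,ζ)v(ξ,ζ)dζdξ is a bijection of L²([0,1]²;ℝ) onto itself. -/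

import Mathlib

/-!
Write `T` for the Volterra operator `(T f)(x, η) = ∫₀ˣ ∫₀¹ L(x,ξ,η,ζ) f(ξ,ζ) dζ dξ`.
Cauchy–Schwarz on `(0, x] × (0, 1]` and the uniform `L²` bound on the kernel give the slice
estimate `‖(T f)(x, ·)‖² ≤ M² ∫₀ˣ ‖f(ξ, ·)‖² dξ`. Multiplying by `e^{-c x}` and exchanging the
order of integration (`∫_ξ^1 e^{-c x} dx ≤ e^{-c ξ} / c`) turns this into
`‖T f‖_c² ≤ (M² / c) ‖f‖_c²` for the weighted norm `‖f‖_c² = ∫∫ e^{-c x} |f(x, η)|²`, which is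
equivalent to the `L²` norm of the unit square. For `c = 4 M² + 1` the map `v ↦ g + T v` is
therefore a contraction with constant `1/2`, and Banach's fixed point theorem gives the unique
solution.
-/

open MeasureTheory Set Filter
open scoped ENNReal NNReal

theorem MeasureTheory.StronglyMeasurable.intervalIntegral_prod_right'
    {α E : Type*} [MeasurableSpace α] [NormedAddCommGroup E] [NormedSpace ℝ E]
    {f : α × ℝ → E} (hf : StronglyMeasurable f) {a b : α → ℝ} (ha : Measurable a)
    (hb : Measurable b) : StronglyMeasurable fun x => ∫ t in a x..b x, f (x, t) := by
  have hIoc : ∀ {u v : α → ℝ}, Measurable u → Measurable v →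
      StronglyMeasurable fun x => ∫ t in Ioc (u x) (v x), f (x, t) := by
    intro u v hu hv
    have hs : MeasurableSet {p : α × ℝ | p.2 ∈ Ioc (u p.1) (v p.1)} :=
      (_root_.measurableSet_lt (hu.comp measurable_fst) measurable_snd).inter
        (_root_.measurableSet_le measurable_snd (hv.comp measurable_fst))
    simp_rw [← integral_indicator measurableSet_Ioc]
    exact (hf.indicator hs).integral_prod_right'
  exact (hIoc ha hb).sub (hIoc hb ha)

theorem ENNReal.lintegral_mul_sq_le {α : Type*} [MeasurableSpace α] (μ : Measure α)
    {f g : α → ℝ≥0∞} (hf : AEMeasurable f μ) (hg : AEMeasurable g μ) :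
    (∫⁻ a, f a * g a ∂μ) ^ 2 ≤ (∫⁻ a, f a ^ 2 ∂μ) * ∫⁻ a, g a ^ 2 ∂μ := by
  have h := ENNReal.lintegral_mul_le_Lp_mul_Lq μ Real.HolderConjugate.two_two hf hg
  calc (∫⁻ a, f a * g a ∂μ) ^ 2
      ≤ ((∫⁻ a, f a ^ (2:ℝ) ∂μ) ^ (1 / 2 : ℝ) *
          (∫⁻ a, g a ^ (2:ℝ) ∂μ) ^ (1 / 2 : ℝ)) ^ 2 :=
        pow_le_pow_left' h 2
    _ = (∫⁻ a, f a ^ 2 ∂μ) * ∫⁻ a, g a ^ 2 ∂μ := by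
        simp only [ENNReal.rpow_two, mul_pow, ← ENNReal.rpow_natCast, ← ENNReal.rpow_mul]
        norm_num

theorem MeasureTheory.eLpNorm_two_sq {α E : Type*} [MeasurableSpace α] [NormedAddCommGroup E]
    (f : α → E) (μ : Measure α) : eLpNorm f 2 μ ^ 2 = ∫⁻ a, ‖f a‖ₑ ^ 2 ∂μ := by
  simpa [ENNReal.rpow_two] using
    eLpNorm_nnreal_pow_eq_lintegral (f := f) (μ := μ) (p := 2) two_ne_zero

theorem lintegral_exp_neg_mul_Ici {c : ℝ} (hc : 0 < c) (ξ : ℝ) :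
    ∫⁻ x in Ici ξ, ENNReal.ofReal (Real.exp (-c * x)) =
      ENNReal.ofReal (Real.exp (-c * ξ) / c) := by
  rw [← Measure.restrict_congr_set Ioi_ae_eq_Ici, ← ofReal_integral_eq_lintegral_ofReal
    (integrableOn_exp_mul_Ioi (neg_lt_zero.2 hc) ξ) (ae_of_all _ fun x => (Real.exp_pos _).le),
    integral_exp_mul_Ioi (neg_lt_zero.2 hc), neg_div_neg_eq]

theorem lintegral_exp_mul_setLIntegral_Ioc_le {c : ℝ} (hc : 0 < c) {φ : ℝ → ℝ≥0∞}
    (hφ : Measurable φ) (a b : ℝ) :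
    ∫⁻ x in Ioc a b, ENNReal.ofReal (Real.exp (-c * x)) * ∫⁻ ξ in Ioc a x, φ ξ ≤
      ENNReal.ofReal c⁻¹ * ∫⁻ ξ in Ioc a b, ENNReal.ofReal (Real.exp (-c * ξ)) * φ ξ := by
  set e : ℝ → ℝ≥0∞ := fun x => ENNReal.ofReal (Real.exp (-c * x))
  have he : Measurable e := by fun_prop
  set F : ℝ → ℝ → ℝ≥0∞ := fun x ξ => if ξ ≤ x then e x * φ ξ else 0
  have hF : Measurable (Function.uncurry F) :=
    Measurable.ite (_root_.measurableSet_le measurable_snd measurable_fst)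
      ((he.comp measurable_fst).mul (hφ.comp measurable_snd)) measurable_const
  have h_inner : ∀ x ∈ Ioc a b, e x * ∫⁻ ξ in Ioc a x, φ ξ = ∫⁻ ξ in Ioc a b, F x ξ := by
    intro x hx
    have : Iic x ∩ Ioc a b = Ioc a x := by
      ext ξ; simp only [mem_inter_iff, mem_Iic, mem_Ioc]
      exact ⟨fun h => ⟨h.2.1, h.1⟩, fun h => ⟨h.2, h.1, h.2.trans hx.2⟩⟩
    have hF_eq : ∀ ξ, F x ξ = (Iic x).indicator (fun ξ => e x * φ ξ) ξ := fun ξ => by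
      simp only [F, indicator_apply, mem_Iic]
    rw [lintegral_congr hF_eq, lintegral_indicator measurableSet_Iic,
      Measure.restrict_restrict measurableSet_Iic, this, lintegral_const_mul _ hφ]
  have h_swap : ∀ ξ, ∫⁻ x in Ioc a b, F x ξ ≤ ENNReal.ofReal c⁻¹ * (e ξ * φ ξ) := by
    intro ξ
    have hF_eq : ∀ x, F x ξ = (Ici ξ).indicator e x * φ ξ := fun x => by
      simp only [F, indicator_apply, mem_Ici, ite_mul, zero_mul]
    rw [lintegral_congr hF_eq, lintegral_mul_const _ (he.indicator measurableSet_Ici),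
      lintegral_indicator measurableSet_Ici, Measure.restrict_restrict measurableSet_Ici]
    calc (∫⁻ x in Ici ξ ∩ Ioc a b, e x) * φ ξ ≤ (∫⁻ x in Ici ξ, e x) * φ ξ := by
          gcongr; exact inter_subset_left
      _ = ENNReal.ofReal c⁻¹ * (e ξ * φ ξ) := by
          rw [lintegral_exp_neg_mul_Ici hc, div_eq_inv_mul,
            ENNReal.ofReal_mul (inv_nonneg.2 hc.le), mul_assoc]
  calc ∫⁻ x in Ioc a b, e x * ∫⁻ ξ in Ioc a x, φ ξ
      = ∫⁻ x in Ioc a b, ∫⁻ ξ in Ioc a b, F x ξ :=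
        setLIntegral_congr_fun measurableSet_Ioc h_inner
    _ = ∫⁻ ξ in Ioc a b, ∫⁻ x in Ioc a b, F x ξ := lintegral_lintegral_swap hF.aemeasurable
    _ ≤ ∫⁻ ξ in Ioc a b, ENNReal.ofReal c⁻¹ * (e ξ * φ ξ) := lintegral_mono h_swap
    _ = ENNReal.ofReal c⁻¹ * ∫⁻ ξ in Ioc a b, e ξ * φ ξ := lintegral_const_mul _ (he.mul hφ)

noncomputable section

namespace Volterra

abbrev squareVolume : Measure (ℝ × ℝ) := volume.restrict (Icc (0:ℝ) 1 ×ˢ Icc (0:ℝ) 1)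

local notation "μ₀" => squareVolume

def rect (x : ℝ) : Measure (ℝ × ℝ) :=
  (volume.restrict (Ioc 0 x)).prod (volume.restrict (Ioc 0 1))

instance (x : ℝ) : SFinite (rect x) := by
  rw [rect]; infer_instance

lemma squareVolume_eq_rect : μ₀ = rect 1 := by
  rw [rect, Measure.restrict_congr_set Ioc_ae_eq_Icc, Measure.prod_restrict,
    ← Measure.volume_eq_prod]

def sliceEnergy (f : ℝ × ℝ → ℝ) (x : ℝ) : ℝ≥0∞ := ∫⁻ η in Ioc 0 1, ‖f (x, η)‖ₑ ^ 2

lemma measurable_sliceEnergy {f : ℝ × ℝ → ℝ} (hf : Measurable f) :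
    Measurable (sliceEnergy f) :=
  (hf.enorm.pow_const 2).lintegral_prod_right'

lemma lintegral_rect_enorm_sq {f : ℝ × ℝ → ℝ} (hf : Measurable f) (x : ℝ) :
    ∫⁻ q, ‖f q‖ₑ ^ 2 ∂rect x = ∫⁻ ξ in Ioc 0 x, sliceEnergy f ξ :=
  lintegral_prod _ (hf.enorm.pow_const 2).aemeasurable

def weightedVolume (c : ℝ) : Measure (ℝ × ℝ) :=
  (μ₀).withDensity fun p => ENNReal.ofReal (Real.exp (-c * p.1))

lemma ae_mem_unitSquare : ∀ᵐ p ∂μ₀, p ∈ Icc (0:ℝ) 1 ×ˢ Icc (0:ℝ) 1 :=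
  ae_restrict_mem (measurableSet_Icc.prod measurableSet_Icc)

lemma weightedVolume_le {c : ℝ} (hc : 0 ≤ c) : weightedVolume c ≤ μ₀ := by
  calc weightedVolume c ≤ (μ₀).withDensity 1 := withDensity_mono ?_
    _ = μ₀ := withDensity_one
  filter_upwards [ae_mem_unitSquare] with p hp
  exact ENNReal.ofReal_le_one.2 (Real.exp_le_one_iff.2 (by nlinarith [hp.1.1]))

lemma le_smul_weightedVolume {c : ℝ} (hc : 0 ≤ c) :
    μ₀ ≤ ENNReal.ofReal (Real.exp c) • weightedVolume c := by
  rw [weightedVolume, ← withDensity_smul' _ _ ENNReal.ofReal_ne_top]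
  calc μ₀ = (μ₀).withDensity 1 := withDensity_one.symm
    _ ≤ _ := withDensity_mono ?_
  filter_upwards [ae_mem_unitSquare] with p hp
  simp only [Pi.one_apply, Pi.smul_apply, smul_eq_mul,
    ← ENNReal.ofReal_mul (Real.exp_nonneg _), ← Real.exp_add]
  exact ENNReal.one_le_ofReal.2 (Real.one_le_exp (by nlinarith [hp.1.2]))

lemma memLp_weightedVolume_iff {c : ℝ} (hc : 0 ≤ c) {f : ℝ × ℝ → ℝ} {p : ℝ≥0∞} :
    MemLp f p (weightedVolume c) ↔ MemLp f p μ₀ :=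
  ⟨fun h => h.of_measure_le_smul ENNReal.ofReal_ne_top (le_smul_weightedVolume hc),
    fun h => h.mono_measure (weightedVolume_le hc)⟩

lemma ae_weightedVolume {c : ℝ} (hc : 0 ≤ c) : ae (weightedVolume c) = ae μ₀ :=
  le_antisymm (Measure.absolutelyContinuous_of_le (weightedVolume_le hc)).ae_le
    (Measure.absolutelyContinuous_of_le_smul (le_smul_weightedVolume hc)).ae_le

lemma lintegral_weightedVolume (c : ℝ) {f : ℝ × ℝ → ℝ} (hf : Measurable f) :
    ∫⁻ p, ‖f p‖ₑ ^ 2 ∂weightedVolume c =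
      ∫⁻ x in Ioc 0 1, ENNReal.ofReal (Real.exp (-c * x)) * sliceEnergy f x := by
  rw [weightedVolume, lintegral_withDensity_eq_lintegral_mul _ (by fun_prop)
    (hf.enorm.pow_const 2), squareVolume_eq_rect, rect, lintegral_prod _ (by fun_prop)]
  simp only [Pi.mul_apply]
  exact lintegral_congr fun x =>
    lintegral_const_mul _ ((hf.comp measurable_prodMk_left).enorm.pow_const 2)

def KernelBound (L : ℝ → ℝ → ℝ → ℝ → ℝ) (M : ℝ) : Prop :=
  ∀ x ξ, ξ ≤ x → x ∈ Icc (0:ℝ) 1 → ξ ∈ Icc (0:ℝ) 1 →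
    ∫⁻ q, ‖L x ξ q.1 q.2‖ₑ ^ 2 ∂rect 1 ≤ ENNReal.ofReal (M ^ 2)

lemma kernelBound_of_memLp {L : ℝ → ℝ → ℝ → ℝ → ℝ} {M : ℝ}
    (hL : ∀ x ξ : ℝ, ξ ≤ x → x ∈ Icc (0:ℝ) 1 → ξ ∈ Icc (0:ℝ) 1 →
      MemLp (fun p : ℝ × ℝ => L x ξ p.1 p.2) 2 μ₀ ∧
      Real.sqrt (∫ η in (0:ℝ)..1, ∫ ζ in (0:ℝ)..1, (L x ξ η ζ) ^ 2) ≤ M) :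
    KernelBound L M := by
  intro x ξ hξx hx hξ
  obtain ⟨hmem, hsqrt⟩ := hL x ξ hξx hx hξ
  rw [squareVolume_eq_rect] at hmem
  have hint := hmem.integrable_sq
  have h_iter : ∫ q, L x ξ q.1 q.2 ^ 2 ∂rect 1 =
      ∫ η in (0:ℝ)..1, ∫ ζ in (0:ℝ)..1, L x ξ η ζ ^ 2 := by
    simp only [rect, integral_prod _ hint, intervalIntegral.integral_of_le zero_le_one]
  calc ∫⁻ q, ‖L x ξ q.1 q.2‖ₑ ^ 2 ∂rect 1
      = ENNReal.ofReal (∫ q, L x ξ q.1 q.2 ^ 2 ∂rect 1) := by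
        rw [ofReal_integral_eq_lintegral_ofReal hint (ae_of_all _ fun q => sq_nonneg _)]
        simp only [Real.enorm_eq_ofReal_abs, ← ENNReal.ofReal_pow (abs_nonneg _), sq_abs]
    _ ≤ ENNReal.ofReal (M ^ 2) := by
        refine ENNReal.ofReal_le_ofReal ?_
        rw [h_iter]
        exact (Real.sqrt_le_iff.1 hsqrt).2

variable {L : ℝ → ℝ → ℝ → ℝ → ℝ}
    (hL : Measurable fun p : ℝ × ℝ × ℝ × ℝ => L p.1 p.2.1 p.2.2.1 p.2.2.2)

include hL in
lemma measurable_kernel_comp {α : Type*} [MeasurableSpace α] {a b c d : α → ℝ}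
    (ha : Measurable a) (hb : Measurable b) (hc : Measurable c) (hd : Measurable d) :
    Measurable fun y => L (a y) (b y) (c y) (d y) :=
  hL.comp (ha.prodMk (hb.prodMk (hc.prodMk hd)))

def operator (L : ℝ → ℝ → ℝ → ℝ → ℝ) (f : ℝ × ℝ → ℝ) (p : ℝ × ℝ) : ℝ :=
  ∫ ξ in (0:ℝ)..p.1, ∫ ζ in (0:ℝ)..1, L p.1 ξ p.2 ζ * f (ξ, ζ)

def integrand (L : ℝ → ℝ → ℝ → ℝ → ℝ) (f : ℝ × ℝ → ℝ) (x η : ℝ) (q : ℝ × ℝ) : ℝ :=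
  L x q.1 η q.2 * f q

lemma operator_of_nonneg (f : ℝ × ℝ → ℝ) {x : ℝ} (hx : 0 ≤ x) (η : ℝ) :
    operator L f (x, η) = ∫ ξ in Ioc 0 x, ∫ ζ in Ioc 0 1, L x ξ η ζ * f (ξ, ζ) := by
  simp only [operator, intervalIntegral.integral_of_le hx,
    intervalIntegral.integral_of_le zero_le_one]

include hL in
lemma stronglyMeasurable_operator {f : ℝ × ℝ → ℝ} (hf : StronglyMeasurable f) :
    StronglyMeasurable (operator L f) := by
  have hinner : StronglyMeasurable fun r : (ℝ × ℝ) × ℝ =>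
      ∫ ζ in (0:ℝ)..1, L r.1.1 r.2 r.1.2 ζ * f (r.2, ζ) := by
    refine StronglyMeasurable.intervalIntegral_prod_right'
      (f := fun s : ((ℝ × ℝ) × ℝ) × ℝ => L s.1.1.1 s.1.2 s.1.1.2 s.2 * f (s.1.2, s.2)) ?_
      measurable_const measurable_const
    exact (measurable_kernel_comp hL measurable_fst.fst.fst measurable_fst.snd
      measurable_fst.fst.snd measurable_snd).stronglyMeasurable.mul
      (hf.comp_measurable (by fun_prop))
  exact hinner.intervalIntegral_prod_right' measurable_const measurable_fst

lemma operator_congr_ae {f g : ℝ × ℝ → ℝ} (hfg : f =ᵐ[μ₀] g) {x : ℝ} (hx : x ∈ Icc (0:ℝ) 1)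
    (η : ℝ) : operator L f (x, η) = operator L g (x, η) := by
  rw [squareVolume_eq_rect, rect] at hfg
  rw [operator_of_nonneg f hx.1, operator_of_nonneg g hx.1]
  refine integral_congr_ae ?_
  filter_upwards [ae_restrict_of_ae_restrict_of_subset (Ioc_subset_Ioc_right hx.2)
    (Measure.ae_ae_of_ae_prod hfg)] with ξ hξ
  refine integral_congr_ae ?_
  filter_upwards [hξ] with ζ hζ
  rw [hζ]

include hL in
lemma measurable_integrand {f : ℝ × ℝ → ℝ} (hf : Measurable f) (x : ℝ) :
    Measurable fun r : ℝ × (ℝ × ℝ) => integrand L f x r.1 r.2 :=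
  (measurable_kernel_comp hL measurable_const measurable_snd.fst measurable_fst
    measurable_snd.snd).mul (hf.comp measurable_snd)

lemma operator_eq_integral {f : ℝ × ℝ → ℝ} {x η : ℝ} (hx : 0 ≤ x)
    (hint : Integrable (integrand L f x η) (rect x)) :
    operator L f (x, η) = ∫ q, integrand L f x η q ∂rect x := by
  rw [operator_of_nonneg f hx, rect, integral_prod _ hint]
  rfl

lemma operator_sub {f g : ℝ × ℝ → ℝ} {x η : ℝ} (hx : 0 ≤ x)
    (hf : Integrable (integrand L f x η) (rect x))
    (hg : Integrable (integrand L g x η) (rect x)) :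
    operator L (f - g) (x, η) = operator L f (x, η) - operator L g (x, η) := by
  have h_sub : integrand L (f - g) x η = integrand L f x η - integrand L g x η := by
    ext q; simp only [integrand, Pi.sub_apply, mul_sub]
  rw [operator_eq_integral hx (h_sub ▸ hf.sub hg), operator_eq_integral hx hf,
    operator_eq_integral hx hg, h_sub]
  exact integral_sub hf hg

include hL in
lemma enorm_operator_le {f : ℝ × ℝ → ℝ} (hf : Measurable f) {x : ℝ} (hx : 0 ≤ x) (η : ℝ) :
    ‖operator L f (x, η)‖ₑ ≤ ∫⁻ q, ‖integrand L f x η q‖ₑ ∂rect x := by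
  by_cases hint : Integrable (integrand L f x η) (rect x)
  · rw [operator_eq_integral hx hint]
    exact enorm_integral_le_lintegral_enorm _
  · have hmeas := (measurable_integrand hL hf x).comp (measurable_prodMk_left (x := η))
    exact le_top.trans (not_lt.1 fun hfin => hint ⟨hmeas.aestronglyMeasurable, hfin⟩)

variable {M : ℝ} (hK : KernelBound L M)

include hL hK

lemma lintegral_kernel_sq_le {x : ℝ} (hx : x ∈ Icc (0:ℝ) 1) :
    ∫⁻ η in Ioc 0 1, ∫⁻ q, ‖L x q.1 η q.2‖ₑ ^ 2 ∂rect x ≤ ENNReal.ofReal (M ^ 2) := by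
  have hmeas : Measurable fun r : (ℝ × ℝ) × ℝ => ‖L x r.1.2 r.1.1 r.2‖ₑ ^ 2 :=
    (measurable_kernel_comp hL measurable_const measurable_fst.snd measurable_fst.fst
      measurable_snd).enorm.pow_const 2
  calc ∫⁻ η in Ioc 0 1, ∫⁻ q, ‖L x q.1 η q.2‖ₑ ^ 2 ∂rect x
      = ∫⁻ η in Ioc 0 1, ∫⁻ ξ in Ioc 0 x, ∫⁻ ζ in Ioc 0 1, ‖L x ξ η ζ‖ₑ ^ 2 := by
        refine lintegral_congr fun η => lintegral_prod _ ?_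
        exact (hmeas.comp (f := fun q : ℝ × ℝ => ((η, q.1), q.2)) (by fun_prop)).aemeasurable
    _ = ∫⁻ ξ in Ioc 0 x, ∫⁻ q, ‖L x ξ q.1 q.2‖ₑ ^ 2 ∂rect 1 := by
        rw [lintegral_lintegral_swap hmeas.lintegral_prod_right'.aemeasurable, rect]
        refine lintegral_congr fun ξ =>
          (lintegral_prod (fun q => ‖L x ξ q.1 q.2‖ₑ ^ 2) ?_).symm
        exact (hmeas.comp (f := fun q : ℝ × ℝ => ((q.1, ξ), q.2)) (by fun_prop)).aemeasurable
    _ ≤ ∫⁻ _ in Ioc 0 x, ENNReal.ofReal (M ^ 2) :=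
        setLIntegral_mono measurable_const fun ξ hξ =>
          hK x ξ hξ.2 hx ⟨hξ.1.le, hξ.2.trans hx.2⟩
    _ ≤ ENNReal.ofReal (M ^ 2) := by
        rw [setLIntegral_const, Real.volume_Ioc, sub_zero]
        exact mul_le_of_le_one_right' (ENNReal.ofReal_le_one.2 hx.2)

lemma lintegral_integrand_sq_le {f : ℝ × ℝ → ℝ} (hf : Measurable f) {x : ℝ} (hx : x ∈ Icc (0:ℝ) 1) :
    ∫⁻ η in Ioc 0 1, (∫⁻ q, ‖integrand L f x η q‖ₑ ∂rect x) ^ 2 ≤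
      ENNReal.ofReal (M ^ 2) * ∫⁻ ξ in Ioc 0 x, sliceEnergy f ξ := by
  have hLx : Measurable fun r : ℝ × (ℝ × ℝ) => ‖L x r.2.1 r.1 r.2.2‖ₑ :=
    (measurable_kernel_comp hL measurable_const measurable_snd.fst measurable_fst
      measurable_snd.snd).enorm
  calc ∫⁻ η in Ioc 0 1, (∫⁻ q, ‖integrand L f x η q‖ₑ ∂rect x) ^ 2
      ≤ ∫⁻ η in Ioc 0 1, (∫⁻ q, ‖L x q.1 η q.2‖ₑ ^ 2 ∂rect x) *
          ∫⁻ ξ in Ioc 0 x, sliceEnergy f ξ := by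
        refine lintegral_mono fun η => ?_
        simp only [integrand, enorm_mul]
        rw [← lintegral_rect_enorm_sq hf]
        exact ENNReal.lintegral_mul_sq_le _ (hLx.comp measurable_prodMk_left).aemeasurable
          hf.enorm.aemeasurable
    _ = (∫⁻ η in Ioc 0 1, ∫⁻ q, ‖L x q.1 η q.2‖ₑ ^ 2 ∂rect x) *
          ∫⁻ ξ in Ioc 0 x, sliceEnergy f ξ :=
        lintegral_mul_const _ (hLx.pow_const 2).lintegral_prod_right'
    _ ≤ ENNReal.ofReal (M ^ 2) * ∫⁻ ξ in Ioc 0 x, sliceEnergy f ξ := by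
        gcongr
        exact lintegral_kernel_sq_le hL hK hx

lemma sliceEnergy_operator_le {f : ℝ × ℝ → ℝ} (hf : Measurable f) {x : ℝ}
    (hx : x ∈ Icc (0:ℝ) 1) :
    sliceEnergy (operator L f) x ≤
      ENNReal.ofReal (M ^ 2) * ∫⁻ ξ in Ioc 0 x, sliceEnergy f ξ :=
  (lintegral_mono fun η => pow_le_pow_left' (enorm_operator_le hL hf hx.1 η) 2).trans
    (lintegral_integrand_sq_le hL hK hf hx)

lemma ae_integrable_integrand {f : ℝ × ℝ → ℝ} (hf : Measurable f) (hf₂ : MemLp f 2 μ₀) {x : ℝ}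
    (hx : x ∈ Icc (0:ℝ) 1) :
    ∀ᵐ η ∂volume.restrict (Ioc 0 1), Integrable (integrand L f x η) (rect x) := by
  have h_energy : ∫⁻ ξ in Ioc 0 x, sliceEnergy f ξ ≠ ⊤ := by
    refine ne_top_of_le_ne_top ?_ (lintegral_mono_set (Ioc_subset_Ioc_right hx.2))
    rw [← lintegral_rect_enorm_sq hf, ← squareVolume_eq_rect, ← eLpNorm_two_sq]
    exact ENNReal.pow_ne_top hf₂.2.ne
  have hmeas := measurable_integrand hL hf x
  have h_fin := ae_lt_top ((hmeas.enorm.lintegral_prod_right').pow_const 2)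
    (ne_top_of_le_ne_top (ENNReal.mul_ne_top ENNReal.ofReal_ne_top h_energy)
      (lintegral_integrand_sq_le hL hK hf hx))
  filter_upwards [h_fin] with η hη
  exact ⟨(hmeas.comp measurable_prodMk_left).aestronglyMeasurable,
    (ENNReal.pow_lt_top_iff.1 hη).resolve_right two_ne_zero⟩

/- `operator` is made of Bochner integrals, which vanish on non-integrable integrands, so it is
additive only where the integrands are integrable: for almost every point of the square. -/
lemma operator_sub_ae {f g : ℝ × ℝ → ℝ} (hf : StronglyMeasurable f) (hg : StronglyMeasurable g)
    (hf₂ : MemLp f 2 μ₀) (hg₂ : MemLp g 2 μ₀) :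
    operator L (f - g) =ᵐ[μ₀] operator L f - operator L g := by
  have hmeas : MeasurableSet {p | operator L (f - g) p = (operator L f - operator L g) p} :=
    measurableSet_eq_fun (stronglyMeasurable_operator hL (hf.sub hg)).measurable
      ((stronglyMeasurable_operator hL hf).sub (stronglyMeasurable_operator hL hg)).measurable
  rw [EventuallyEq, squareVolume_eq_rect, rect, Measure.ae_prod_iff_ae_ae hmeas]
  filter_upwards [ae_restrict_mem measurableSet_Ioc] with x hx
  filter_upwards [ae_integrable_integrand hL hK hf.measurable hf₂ (Ioc_subset_Icc_self hx),
    ae_integrable_integrand hL hK hg.measurable hg₂ (Ioc_subset_Icc_self hx)] with η hfη hgη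
  exact operator_sub hx.1.le hfη hgη

lemma lintegral_operator_sq_le {c : ℝ} (hc : 0 < c) {f : ℝ × ℝ → ℝ}
    (hf : StronglyMeasurable f) :
    ∫⁻ p, ‖operator L f p‖ₑ ^ 2 ∂weightedVolume c ≤
      ENNReal.ofReal (M ^ 2 / c) * ∫⁻ p, ‖f p‖ₑ ^ 2 ∂weightedVolume c := by
  set e : ℝ → ℝ≥0∞ := fun x => ENNReal.ofReal (Real.exp (-c * x))
  rw [lintegral_weightedVolume c (stronglyMeasurable_operator hL hf).measurable,
    lintegral_weightedVolume c hf.measurable]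
  calc ∫⁻ x in Ioc 0 1, e x * sliceEnergy (operator L f) x
      ≤ ∫⁻ x in Ioc 0 1, e x * (ENNReal.ofReal (M ^ 2) * ∫⁻ ξ in Ioc 0 x, sliceEnergy f ξ) :=
        setLIntegral_mono' measurableSet_Ioc fun x hx => by
          gcongr; exact sliceEnergy_operator_le hL hK hf.measurable (Ioc_subset_Icc_self hx)
    _ = ENNReal.ofReal (M ^ 2) * ∫⁻ x in Ioc 0 1, e x * ∫⁻ ξ in Ioc 0 x, sliceEnergy f ξ := by
        rw [← lintegral_const_mul' _ _ ENNReal.ofReal_ne_top]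
        exact lintegral_congr fun x => mul_left_comm _ _ _
    _ ≤ ENNReal.ofReal (M ^ 2) *
          (ENNReal.ofReal c⁻¹ * ∫⁻ x in Ioc 0 1, e x * sliceEnergy f x) := by
        gcongr
        exact lintegral_exp_mul_setLIntegral_Ioc_le hc (measurable_sliceEnergy hf.measurable) 0 1
    _ = ENNReal.ofReal (M ^ 2 / c) * ∫⁻ x in Ioc 0 1, e x * sliceEnergy f x := by
        rw [← mul_assoc, ← ENNReal.ofReal_mul (sq_nonneg M), div_eq_mul_inv]

lemma eLpNorm_operator_le {f : ℝ × ℝ → ℝ} (hf : StronglyMeasurable f) :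
    eLpNorm (operator L f) 2 (weightedVolume (4 * M ^ 2 + 1)) ≤
      2⁻¹ * eLpNorm f 2 (weightedVolume (4 * M ^ 2 + 1)) := by
  rw [← ENNReal.pow_le_pow_left_iff two_ne_zero, mul_pow, eLpNorm_two_sq, eLpNorm_two_sq]
  refine (lintegral_operator_sq_le hL hK (by positivity) hf).trans ?_
  gcongr
  rw [← ENNReal.inv_pow, ← ENNReal.ofReal_ofNat, ← ENNReal.ofReal_pow zero_le_two,
    ← ENNReal.ofReal_inv_of_pos (by norm_num)]
  refine ENNReal.ofReal_le_ofReal ?_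
  rw [div_le_iff₀ (by positivity)]
  nlinarith

lemma memLp_operator {f : ℝ × ℝ → ℝ} (hf : StronglyMeasurable f) (hf₂ : MemLp f 2 μ₀) :
    MemLp (operator L f) 2 μ₀ := by
  have hc : (0:ℝ) ≤ 4 * M ^ 2 + 1 := by positivity
  rw [← memLp_weightedVolume_iff hc] at hf₂ ⊢
  exact ⟨(stronglyMeasurable_operator hL hf).aestronglyMeasurable,
    (eLpNorm_operator_le hL hK hf).trans_lt (ENNReal.mul_lt_top (by norm_num) hf₂.2)⟩

lemma exists_contractingWith {g : ℝ × ℝ → ℝ} (hg : MemLp g 2 μ₀) :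
    ∃ Φ : Lp ℝ 2 (weightedVolume (4 * M ^ 2 + 1)) → Lp ℝ 2 (weightedVolume (4 * M ^ 2 + 1)),
      ContractingWith 2⁻¹ Φ ∧ ∀ F, Φ F =ᵐ[μ₀] g + operator L F := by
  have hc : (0:ℝ) ≤ 4 * M ^ 2 + 1 := by positivity
  have hF₂ (F : Lp ℝ 2 (weightedVolume (4 * M ^ 2 + 1))) : MemLp F 2 μ₀ :=
    (memLp_weightedVolume_iff hc).1 (Lp.memLp F)
  have hΦ₂ (F : Lp ℝ 2 (weightedVolume (4 * M ^ 2 + 1))) :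
      MemLp (g + operator L F) 2 (weightedVolume (4 * M ^ 2 + 1)) :=
    (memLp_weightedVolume_iff hc).2
      (hg.add (memLp_operator hL hK (Lp.stronglyMeasurable F) (hF₂ F)))
  have hΦ_ae (F) : (hΦ₂ F).toLp =ᵐ[μ₀] g + operator L F := by
    rw [← ae_weightedVolume hc]; exact (hΦ₂ F).coeFn_toLp
  refine ⟨fun F => (hΦ₂ F).toLp, ⟨by norm_num, fun F₁ F₂ => ?_⟩, hΦ_ae⟩
  have h_sub := operator_sub_ae hL hK (Lp.stronglyMeasurable F₁) (Lp.stronglyMeasurable F₂)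
    (hF₂ F₁) (hF₂ F₂)
  have h_diff : ⇑(hΦ₂ F₁).toLp - ⇑(hΦ₂ F₂).toLp =ᵐ[weightedVolume (4 * M ^ 2 + 1)]
      operator L (⇑F₁ - ⇑F₂) := by
    rw [ae_weightedVolume hc]
    filter_upwards [hΦ_ae F₁, hΦ_ae F₂, h_sub] with p h₁ h₂ h₃
    simp only [Pi.sub_apply, Pi.add_apply, h₁, h₂, h₃]
    ring
  rw [Lp.edist_def, Lp.edist_def, eLpNorm_congr_ae h_diff, ENNReal.coe_inv two_ne_zero,
    ENNReal.coe_ofNat]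
  exact eLpNorm_operator_le hL hK ((Lp.stronglyMeasurable F₁).sub (Lp.stronglyMeasurable F₂))

theorem exists_unique_solution {g : ℝ × ℝ → ℝ} (hg : MemLp g 2 μ₀) :
    ∃ v, MemLp v 2 μ₀ ∧ (∀ᵐ p ∂μ₀, v p = g p + operator L v p) ∧
      ∀ w, MemLp w 2 μ₀ → (∀ᵐ p ∂μ₀, w p = g p + operator L w p) → w =ᵐ[μ₀] v := by
  have hc : (0:ℝ) ≤ 4 * M ^ 2 + 1 := by positivity
  obtain ⟨Φ, hΦ, hΦ_ae⟩ := exists_contractingWith hL hK hg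
  have h_fixed {w : ℝ × ℝ → ℝ} (hw : MemLp w 2 (weightedVolume (4 * M ^ 2 + 1))) :
      Φ hw.toLp = hw.toLp ↔ ∀ᵐ p ∂μ₀, w p = g p + operator L w p := by
    have h_coe : hw.toLp =ᵐ[μ₀] w := by rw [← ae_weightedVolume hc]; exact hw.coeFn_toLp
    have h_op : ∀ᵐ p ∂μ₀, operator L hw.toLp p = operator L w p := by
      filter_upwards [ae_mem_unitSquare] with p hp
      exact operator_congr_ae h_coe hp.1 p.2
    rw [Lp.ext_iff, ae_weightedVolume hc]
    constructor <;> intro h <;>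
      filter_upwards [h, hΦ_ae hw.toLp, h_coe, h_op] with p h₁ h₂ h₃ h₄
    · rw [← h₃, ← h₁, h₂, Pi.add_apply, h₄]
    · rw [h₂, Pi.add_apply, h₃, h₄, ← h₁]
  have : Nonempty (Lp ℝ 2 (weightedVolume (4 * M ^ 2 + 1))) := ⟨0⟩
  set V := ContractingWith.fixedPoint Φ hΦ
  have hV := Lp.memLp V
  refine ⟨V, (memLp_weightedVolume_iff hc).1 hV, (h_fixed hV).1 ?_, fun w hw hw_eq => ?_⟩
  · rw [Lp.toLp_coeFn]; exact hΦ.fixedPoint_isFixedPt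
  · have hw' := (memLp_weightedVolume_iff hc).2 hw
    have hW : hw'.toLp = V := hΦ.fixedPoint_unique ((h_fixed hw').2 hw_eq)
    have h_coe : hw'.toLp =ᵐ[μ₀] w := by rw [← ae_weightedVolume hc]; exact hw'.coeFn_toLp
    rw [hW] at h_coe
    exact h_coe.symm

end Volterra

end

theorem stmt_18_general (L : ℝ → ℝ → ℝ → ℝ → ℝ) (M : ℝ)
    (hmeas : Measurable (fun p : ℝ × ℝ × ℝ × ℝ => L p.1 p.2.1 p.2.2.1 p.2.2.2))
    (hL2 : ∀ x ξ : ℝ, ξ ≤ x → x ∈ Set.Icc (0:ℝ) 1 → ξ ∈ Set.Icc (0:ℝ) 1 →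
      MeasureTheory.MemLp (fun p : ℝ × ℝ => L x ξ p.1 p.2) 2
        (MeasureTheory.volume.restrict ((Set.Icc (0:ℝ) 1) ×ˢ (Set.Icc (0:ℝ) 1))) ∧
      Real.sqrt (∫ η in (0:ℝ)..1, ∫ ζ in (0:ℝ)..1, (L x ξ η ζ) ^ 2) ≤ M) :
    ∀ g : ℝ → ℝ → ℝ,
      MeasureTheory.MemLp (fun p : ℝ × ℝ => g p.1 p.2) 2
        (MeasureTheory.volume.restrict ((Set.Icc (0:ℝ) 1) ×ˢ (Set.Icc (0:ℝ) 1))) →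
      ∃ v : ℝ → ℝ → ℝ,
        MeasureTheory.MemLp (fun p : ℝ × ℝ => v p.1 p.2) 2
          (MeasureTheory.volume.restrict ((Set.Icc (0:ℝ) 1) ×ˢ (Set.Icc (0:ℝ) 1))) ∧
        (∀ᵐ p ∂(MeasureTheory.volume.restrict
            ((Set.Icc (0:ℝ) 1) ×ˢ (Set.Icc (0:ℝ) 1))),
          v p.1 p.2 = g p.1 p.2 +
            ∫ ξ in (0:ℝ)..p.1, ∫ ζ in (0:ℝ)..1, L p.1 ξ p.2 ζ * v ξ ζ) ∧
        (∀ w : ℝ → ℝ → ℝ,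
          MeasureTheory.MemLp (fun p : ℝ × ℝ => w p.1 p.2) 2
            (MeasureTheory.volume.restrict
              ((Set.Icc (0:ℝ) 1) ×ˢ (Set.Icc (0:ℝ) 1))) →
          (∀ᵐ p ∂(MeasureTheory.volume.restrict
              ((Set.Icc (0:ℝ) 1) ×ˢ (Set.Icc (0:ℝ) 1))),
            w p.1 p.2 = g p.1 p.2 +
              ∫ ξ in (0:ℝ)..p.1, ∫ ζ in (0:ℝ)..1, L p.1 ξ p.2 ζ * w ξ ζ) →
          (∀ᵐ p ∂(MeasureTheory.volume.restrict
              ((Set.Icc (0:ℝ) 1) ×ˢ (Set.Icc (0:ℝ) 1))),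
            w p.1 p.2 = v p.1 p.2)) := by
  intro g hg
  obtain ⟨v, hv, hv_eq, hv_unique⟩ :=
    Volterra.exists_unique_solution hmeas (Volterra.kernelBound_of_memLp hL2) hg
  exact ⟨fun x η => v (x, η), hv, hv_eq, fun w hw hw_eq => hv_unique _ hw hw_eq⟩

/-- for a measurable kernel `L` uniformly `L²`-bounded in its last
two variables over the triangle `𝒯 = {ξ ≤ x} ∩ [0,1]²`, and every
`g ∈ L²([0,1]²;ℝ)`, the Volterra integral equation
`v(x,η) = g(x,η) + ∫₀ˣ∫₀¹ L(x,ξ,η,ζ) v(ξ,ζ) dζ dξ` has a solution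
`v ∈ L²([0,1]²;ℝ)` which is unique up to a.e. equality; consequently the
backstepping transformation is a bijection of `L²([0,1]²;ℝ)` onto itself. -/
theorem stmt_18 (L : ℝ → ℝ → ℝ → ℝ → ℝ) (M : ℝ) (hM : 0 ≤ M)
    (hmeas : Measurable (fun p : ℝ × ℝ × ℝ × ℝ => L p.1 p.2.1 p.2.2.1 p.2.2.2))
    (hL2 : ∀ x ξ : ℝ, ξ ≤ x → x ∈ Set.Icc (0:ℝ) 1 → ξ ∈ Set.Icc (0:ℝ) 1 →
      MeasureTheory.MemLp (fun p : ℝ × ℝ => L x ξ p.1 p.2) 2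
        (MeasureTheory.volume.restrict ((Set.Icc (0:ℝ) 1) ×ˢ (Set.Icc (0:ℝ) 1))) ∧
      Real.sqrt (∫ η in (0:ℝ)..1, ∫ ζ in (0:ℝ)..1, (L x ξ η ζ) ^ 2) ≤ M) :
    ∀ g : ℝ → ℝ → ℝ,
      MeasureTheory.MemLp (fun p : ℝ × ℝ => g p.1 p.2) 2
        (MeasureTheory.volume.restrict ((Set.Icc (0:ℝ) 1) ×ˢ (Set.Icc (0:ℝ) 1))) →
      ∃ v : ℝ → ℝ → ℝ,
        MeasureTheory.MemLp (fun p : ℝ × ℝ => v p.1 p.2) 2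
          (MeasureTheory.volume.restrict ((Set.Icc (0:ℝ) 1) ×ˢ (Set.Icc (0:ℝ) 1))) ∧
        (∀ᵐ p ∂(MeasureTheory.volume.restrict
            ((Set.Icc (0:ℝ) 1) ×ˢ (Set.Icc (0:ℝ) 1))),
          v p.1 p.2 = g p.1 p.2 +
            ∫ ξ in (0:ℝ)..p.1, ∫ ζ in (0:ℝ)..1, L p.1 ξ p.2 ζ * v ξ ζ) ∧
        (∀ w : ℝ → ℝ → ℝ,
          MeasureTheory.MemLp (fun p : ℝ × ℝ => w p.1 p.2) 2
            (MeasureTheory.volume.restrict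
              ((Set.Icc (0:ℝ) 1) ×ˢ (Set.Icc (0:ℝ) 1))) →
          (∀ᵐ p ∂(MeasureTheory.volume.restrict
              ((Set.Icc (0:ℝ) 1) ×ˢ (Set.Icc (0:ℝ) 1))),
            w p.1 p.2 = g p.1 p.2 +
              ∫ ξ in (0:ℝ)..p.1, ∫ ζ in (0:ℝ)..1, L p.1 ξ p.2 ζ * w ξ ζ) →
          (∀ᵐ p ∂(MeasureTheory.volume.restrict
              ((Set.Icc (0:ℝ) 1) ×ˢ (Set.Icc (0:ℝ) 1))),
            w p.1 p.2 = v p.1 p.2)) :=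
  stmt_18_general L M hmeas hL2
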